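/- arXiv:1812.04094 — 2 statements merged into one kernel-verified Lean document; each statement's English description precedes it below -/
import Mathlib

section
/- Let d ≥ 3 be odd, and define F = [X^{(d+1)/2} Y^{(d−1)/2} : 0] ∈ ℙ^{2d+1} and G = [X^{(d+1)/2} Y^{(d−1)/2} : X^{(d−3)/2} Y^{(d+3)/2}] ∈ ℙ^{2d+1} (i.e., F([X:Y]) = X^{(d+1)/2}Y^{(d−1)/2}[1:0] and G([X:Y]) = X^{(d−3)/2}Y^{(d−1)/2}[X²:Y²]). Then: (i) both F and G are semistable but not stable; (ii) for M_t([X:Y]) = [tX:Y], the conjugate M_t ∘ G ∘ M_t^{−1} = [X^{(d+1)/2}Y^{(d−1)/2} : t·X^{(d−3)/2}Y^{(d+3)/2}] converges to F in ℙ^{2d+1} as t → 0. -/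
open MvPolynomial Filter Topology
open scoped Classical

noncomputable section

/-- Binary forms: polynomials in `X 0, X 1` over `ℂ`. A pair of homogeneous elements of
degree `d`, not both zero, represents a point of `ℙ^{2d+1}`. -/
abbrev MP : Type := MvPolynomial (Fin 2) ℂ

noncomputable instance : NormalizationMonoid MP :=
  UniqueFactorizationMonoid.strongNormalizationMonoid.toNormalizationMonoid

noncomputable instance : NormalizedGCDMonoid MP :=
  UniqueFactorizationMonoid.toNormalizedGCDMonoid MP

/-- The complex projective line `ℙ¹(ℂ)`. -/
abbrev P1 : Type := Projectivization ℂ (Fin 2 → ℂ)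

/-- A linear form vanishing exactly at the projective point `z`. -/
noncomputable def linForm (z : P1) : MP :=
  C (z.rep 1) * X 0 - C (z.rep 0) * X 1

/-- Multiplicity of `z` as a zero of the binary form `H`. -/
noncomputable def rootMult (H : MP) (z : P1) : ℕ :=
  sSup {k : ℕ | linForm z ^ k ∣ H}

/-- `H_f = gcd(P, Q)` for `f = [P : Q]`. -/
noncomputable def Hgcd (f : MP × MP) : MP := gcd f.1 f.2

/-- The depth `d_z(f)` of `z` as a hole of `f`: multiplicity of `z` as a zero of `H_f`. -/
noncomputable def depthP (f : MP × MP) (z : P1) : ℕ := rootMult (Hgcd f) z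

/-- `z` is a hole of `f`, i.e. a zero of `H_f`. -/
def IsHole (f : MP × MP) (z : P1) : Prop := linForm z ∣ Hgcd f

/-- The induced map `f̂ = [P / H_f : Q / H_f]` as a pair of binary forms. -/
noncomputable def fhat (f : MP × MP) : MP × MP :=
  ((dvd_def.mp (gcd_dvd_left f.1 f.2)).choose,
   (dvd_def.mp (gcd_dvd_right f.1 f.2)).choose)

/-- A pair of binary forms acting as a self-map of `ℙ¹` (junk value `z` where undefined). -/
noncomputable def apply₁ (g : MP × MP) (z : P1) : P1 :=
  if h : (![eval z.rep g.1, eval z.rep g.2] : Fin 2 → ℂ) ≠ 0 then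
    Projectivization.mk ℂ _ h
  else z

/-- The induced map `f̂` as a self-map of `ℙ¹`. -/
noncomputable def fhatFun (f : MP × MP) : P1 → P1 := apply₁ (fhat f)

/-- The induced map of `f` is constant. -/
def ConstHat (f : MP × MP) : Prop := ∃ c : P1, ∀ z : P1, fhatFun f z = c

/-- Local multiplicity `m_z(g)` of the rational map `[g.1 : g.2]` at `z`
(equal to `0` when the map is constant). -/
noncomputable def multAt (g : MP × MP) (z : P1) : ℕ :=
  rootMult (C (eval z.rep g.2) * g.1 - C (eval z.rep g.1) * g.2) z

/-- Local multiplicity `m_z(f̂)` of the induced map of `f` at `z`. -/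
noncomputable def hatMult (f : MP × MP) (z : P1) : ℕ := multAt (fhat f) z

/-- Composition of pairs of binary forms (homogeneous representatives). -/
noncomputable def comp2 (f g : MP × MP) : MP × MP :=
  (aeval ![g.1, g.2] f.1, aeval ![g.1, g.2] f.2)

/-- The iterate `f^n` as a pair of binary forms (canonical homogeneous representative). -/
noncomputable def iterPair (f : MP × MP) : ℕ → MP × MP
  | 0 => (X 0, X 1)
  | n + 1 => comp2 f (iterPair f n)

/-- GIT semistability of a degree-`d` point `f` of `ℙ^{2d+1}`. -/
def Semistable (d : ℕ) (f : MP × MP) : Prop :=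
  (∀ z : P1, (depthP f z : ℚ) ≤ ((d : ℚ) + 1) / 2) ∧
  ∀ h : P1, (d : ℚ) / 2 ≤ (depthP f h : ℚ) → fhatFun f h ≠ h

/-- GIT stability of a degree-`d` point `f` of `ℙ^{2d+1}`. -/
def Stable (d : ℕ) (f : MP × MP) : Prop :=
  (∀ z : P1, (depthP f z : ℚ) ≤ (d : ℚ) / 2) ∧
  ∀ h : P1, ((d : ℚ) - 1) / 2 ≤ (depthP f h : ℚ) → fhatFun f h ≠ h

/-- The indeterminacy locus `I(d)`: the induced map is a constant `c` which is a hole. -/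
def Idet (f : MP × MP) : Prop :=
  ∃ c : P1, (∀ z : P1, fhatFun f z = c) ∧ IsHole f c

/-- The set `U_n` of `n`-unstable maps. -/
def Unstable (d n : ℕ) (f : MP × MP) : Prop :=
  Semistable d f ∧ ¬ Idet f ∧ ¬ Semistable (d ^ n) (iterPair f n)

/-- `f` is a representative of a point of `ℙ^{2d+1}`: a pair of homogeneous binary
forms of degree `d`, not both zero. -/
def IsRatRep (d : ℕ) (f : MP × MP) : Prop :=
  f.1.IsHomogeneous d ∧ f.2.IsHomogeneous d ∧ f ≠ 0

/-- Projective equality of pairs of binary forms. -/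
def ProjEq (f g : MP × MP) : Prop := ∃ c : ℂ, c ≠ 0 ∧ g = (C c * f.1, C c * f.2)

/-- The point `∞ = [1 : 0]` of `ℙ¹`. -/
noncomputable def infty : P1 :=
  Projectivization.mk ℂ ![1, 0] (by
    intro h
    simpa using congrFun h 0)

/-- The point `[a : 1]` of `ℙ¹`. -/
noncomputable def ptc (a : ℂ) : P1 :=
  Projectivization.mk ℂ ![a, 1] (by
    intro h
    simpa using congrFun h 1)

/-- The degree of a pair of binary forms. -/
def pairDeg (g : MP × MP) : ℕ := max g.1.totalDegree g.2.totalDegree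

end

/-! The holes of `F` and `G` lie at `0 = [0 : 1]` and `∞ = [1 : 0]`, where a monomial
`X^a Y^b` vanishes to order `a` resp. `b`. Since `H_F ∼ X^{m+1} Y^m` and, `X²` and `Y²` being
coprime, `H_G ∼ X^{m-1} Y^m` with `Ĝ = [X² : Y²]`, the depths are read off the exponents.
`F` has depth `m + 1 > d/2` at `0`, which is allowed because `F̂ ≡ ∞` moves `0`;
`G` has all depths `≤ m < d/2`, but depth `m = (d-1)/2` at its fixed point `∞`.
The conjugate `M_t ∘ G ∘ M_t⁻¹` is `t^{m+1} · (X^{m+1} Y^m, t X^{m-1} Y^{m+2})`. -/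

theorem MvPolynomial.X_pow_dvd_X_pow_mul_X_pow_iff {σ R : Type*} [CommSemiring R] [Nontrivial R]
    {i j : σ} (hij : i ≠ j) {k a b : ℕ} :
    (X i ^ k : MvPolynomial σ R) ∣ X i ^ a * X j ^ b ↔ k ≤ a := by
  simp only [X_pow_eq_monomial, monomial_mul, one_mul, monomial_one_dvd_monomial_one,
    Finsupp.single_le_iff, Finsupp.add_apply, Finsupp.single_eq_same,
    Finsupp.single_eq_of_ne hij, add_zero]

theorem isUnit_gcd_X_zero_pow_X_one_pow (a b : ℕ) : IsUnit (gcd (X 0 ^ a) (X 1 ^ b) : MP) := by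
  refine gcd_isUnit_iff_isRelPrime.mpr (IsRelPrime.pow ?_)
  exact X_prime.irreducible.isRelPrime_iff_not_dvd.mpr (by simp)

theorem rep_zero_ne_zero_or_rep_one_ne_zero (z : P1) : z.rep 0 ≠ 0 ∨ z.rep 1 ≠ 0 := by
  by_contra! h
  exact z.rep_nonzero (funext fun i => by fin_cases i <;> simp [h.1, h.2])

theorem infty_rep_zero_ne_zero : infty.rep 0 ≠ 0 := by
  obtain ⟨a, ha⟩ := Projectivization.exists_smul_eq_mk_rep ℂ ![(1 : ℂ), 0] (by simp)
  rw [infty, ← ha]; simp [Units.smul_def]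

theorem infty_rep_one : infty.rep 1 = 0 := by
  obtain ⟨a, ha⟩ := Projectivization.exists_smul_eq_mk_rep ℂ ![(1 : ℂ), 0] (by simp)
  rw [infty, ← ha]; simp

theorem ptc_zero_rep_zero : (ptc 0).rep 0 = 0 := by
  obtain ⟨a, ha⟩ := Projectivization.exists_smul_eq_mk_rep ℂ ![(0 : ℂ), 1] (by simp)
  rw [ptc, ← ha]; simp

theorem eval_rep_linForm (z : P1) : eval z.rep (linForm z) = 0 := by
  simp [linForm]; ring

theorem linForm_associated_X_zero {z : P1} (hz : z.rep 0 = 0) : Associated (linForm z) (X 0) := by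
  have h1 : z.rep 1 ≠ 0 := (rep_zero_ne_zero_or_rep_one_ne_zero z).resolve_left (not_not.mpr hz)
  rw [show linForm z = C (z.rep 1) * X 0 by simp [linForm, hz]]
  exact associated_unit_mul_left _ _ ((isUnit_iff_ne_zero.mpr h1).map C)

theorem linForm_associated_X_one {z : P1} (hz : z.rep 1 = 0) : Associated (linForm z) (X 1) := by
  have h0 : z.rep 0 ≠ 0 := (rep_zero_ne_zero_or_rep_one_ne_zero z).resolve_right (not_not.mpr hz)
  rw [show linForm z = C (-z.rep 0) * X 1 by simp [linForm, hz]]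
  exact associated_unit_mul_left _ _ ((isUnit_iff_ne_zero.mpr (neg_ne_zero.mpr h0)).map C)

theorem rootMult_eq_of_associated {H H' : MP} (h : Associated H H') (z : P1) :
    rootMult H z = rootMult H' z := by
  simp only [rootMult, h.dvd_iff_dvd_right]

theorem rootMult_eq_of_pow_dvd_iff {H : MP} {z : P1} {n : ℕ}
    (h : ∀ k, linForm z ^ k ∣ H ↔ k ≤ n) : rootMult H z = n := by
  simp only [rootMult, h]
  exact csSup_Iic

theorem rootMult_X_pow_mul_X_pow (a b : ℕ) (z : P1) :
    rootMult (X 0 ^ a * X 1 ^ b) z = if z.rep 0 = 0 then a else if z.rep 1 = 0 then b else 0 := by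
  split_ifs with h0 h1 <;> refine rootMult_eq_of_pow_dvd_iff fun k => ?_
  · rw [((linForm_associated_X_zero h0).pow_pow (n := k)).dvd_iff_dvd_left]
    exact X_pow_dvd_X_pow_mul_X_pow_iff (by decide)
  · rw [((linForm_associated_X_one h1).pow_pow (n := k)).dvd_iff_dvd_left, mul_comm]
    exact X_pow_dvd_X_pow_mul_X_pow_iff (by decide)
  · refine ⟨fun hk => Nat.le_zero.mpr (by_contra fun hk0 => ?_), fun hk => by simp_all⟩
    obtain ⟨q, hq⟩ := (dvd_pow_self _ hk0).trans hk
    have := congrArg (eval z.rep) hq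
    simp [eval_rep_linForm, h0, h1] at this

theorem Hgcd_mul_associated_of_isUnit_gcd {h p q : MP} (hpq : IsUnit (gcd p q)) :
    Associated (Hgcd (h * p, h * q)) h :=
  (gcd_mul_left' h p q).trans (associated_mul_unit_left h _ hpq)

theorem Hgcd_mul_fhat (f : MP × MP) : (Hgcd f * (fhat f).1, Hgcd f * (fhat f).2) = f :=
  Prod.ext (dvd_def.mp (gcd_dvd_left f.1 f.2)).choose_spec.symm
    (dvd_def.mp (gcd_dvd_right f.1 f.2)).choose_spec.symm

theorem apply₁_unit_mul {u : MP} (hu : IsUnit u) (p q : MP) :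
    apply₁ (u * p, u * q) = apply₁ (p, q) := by
  funext z
  have hc : eval z.rep u ≠ 0 := (hu.map (eval z.rep)).ne_zero
  have hv : (![eval z.rep (u * p), eval z.rep (u * q)] : Fin 2 → ℂ)
      = eval z.rep u • ![eval z.rep p, eval z.rep q] := by
    ext i; fin_cases i <;> simp
  by_cases hpq : (![eval z.rep p, eval z.rep q] : Fin 2 → ℂ) = 0
  · have huv : (![eval z.rep (u * p), eval z.rep (u * q)] : Fin 2 → ℂ) = 0 := by
      rw [hv, hpq, smul_zero]
    simp only [apply₁, huv, hpq, ne_eq, not_true_eq_false, dite_false]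
  · have huv : (![eval z.rep (u * p), eval z.rep (u * q)] : Fin 2 → ℂ) ≠ 0 := by
      rw [hv]; exact smul_ne_zero hc hpq
    simp only [apply₁, dif_pos huv, dif_pos hpq]
    exact (Projectivization.mk_eq_mk_iff' ℂ _ _ huv hpq).mpr ⟨_, hv.symm⟩

theorem apply₁_eq_infty {g : MP × MP} {z : P1} (h1 : eval z.rep g.1 ≠ 0)
    (h2 : eval z.rep g.2 = 0) : apply₁ g z = infty := by
  have hne : (![eval z.rep g.1, eval z.rep g.2] : Fin 2 → ℂ) ≠ 0 :=
    fun h => h1 (by simpa using congrFun h 0)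
  rw [apply₁, dif_pos hne, infty, Projectivization.mk_eq_mk_iff']
  exact ⟨eval z.rep g.1, by ext i; fin_cases i <;> simp [h2]⟩

theorem fhatFun_mul_of_isUnit_gcd {h p q : MP} (hh : h ≠ 0) (hpq : IsUnit (gcd p q)) :
    fhatFun (h * p, h * q) = apply₁ (p, q) := by
  set f : MP × MP := (h * p, h * q)
  obtain ⟨u, hu⟩ := (Hgcd_mul_associated_of_isUnit_gcd (h := h) hpq).symm
  have hf := Hgcd_mul_fhat f
  rw [← hu, Prod.ext_iff, mul_assoc, mul_assoc] at hf
  rw [fhatFun, ← apply₁_unit_mul u.isUnit, mul_left_cancel₀ hh hf.1,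
    mul_left_cancel₀ hh hf.2]

theorem depthP_pair_zero (P : MP) (z : P1) : depthP (P, 0) z = rootMult P z := by
  have h := Hgcd_mul_associated_of_isUnit_gcd (h := P) (isUnit_gcd_one_left 0)
  rw [mul_one, mul_zero] at h
  exact rootMult_eq_of_associated h z

theorem fhatFun_pair_zero {P : MP} (hP : P ≠ 0) (z : P1) : fhatFun (P, 0) z = infty := by
  have := fhatFun_mul_of_isUnit_gcd hP (isUnit_gcd_one_left 0)
  simp only [mul_one, mul_zero] at this
  rw [this]
  exact apply₁_eq_infty (by simp) (by simp)

noncomputable def mapF (m : ℕ) : MP × MP := (X 0 ^ (m + 1) * X 1 ^ m, 0)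

noncomputable def mapG (m : ℕ) : MP × MP :=
  (X 0 ^ (m + 1) * X 1 ^ m, X 0 ^ (m - 1) * X 1 ^ (m + 2))

theorem mapG_eq {m : ℕ} (hm : 1 ≤ m) :
    mapG m = (X 0 ^ (m - 1) * X 1 ^ m * X 0 ^ 2, X 0 ^ (m - 1) * X 1 ^ m * X 1 ^ 2) := by
  obtain ⟨k, rfl⟩ : ∃ k, m = k + 1 := ⟨m - 1, by omega⟩
  simp only [mapG, Nat.add_sub_cancel, Prod.mk.injEq]
  constructor <;> ring

theorem depthP_mapG {m : ℕ} (hm : 1 ≤ m) (z : P1) :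
    depthP (mapG m) z = rootMult (X 0 ^ (m - 1) * X 1 ^ m) z := by
  rw [mapG_eq hm]
  exact rootMult_eq_of_associated
    (Hgcd_mul_associated_of_isUnit_gcd (isUnit_gcd_X_zero_pow_X_one_pow 2 2)) z

theorem fhatFun_mapG_infty {m : ℕ} (hm : 1 ≤ m) : fhatFun (mapG m) infty = infty := by
  rw [mapG_eq hm, fhatFun_mul_of_isUnit_gcd (by simp) (isUnit_gcd_X_zero_pow_X_one_pow 2 2)]
  exact apply₁_eq_infty (by simp [infty_rep_zero_ne_zero]) (by simp [infty_rep_one])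

theorem semistable_mapF (m : ℕ) : Semistable (2 * m + 1) (mapF m) := by
  refine ⟨fun z => ?_, fun z hz => ?_⟩
  · rw [mapF, depthP_pair_zero, rootMult_X_pow_mul_X_pow]
    split_ifs <;> push_cast <;> linarith [m.cast_nonneg (α := ℚ)]
  · rw [mapF, fhatFun_pair_zero (by simp)]
    rintro rfl
    rw [mapF, depthP_pair_zero, rootMult_X_pow_mul_X_pow, if_neg infty_rep_zero_ne_zero,
      if_pos infty_rep_one] at hz
    push_cast at hz
    linarith

theorem not_stable_mapF (m : ℕ) : ¬ Stable (2 * m + 1) (mapF m) := by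
  intro h
  have := h.1 (ptc 0)
  rw [mapF, depthP_pair_zero, rootMult_X_pow_mul_X_pow, if_pos ptc_zero_rep_zero] at this
  push_cast at this
  linarith

theorem semistable_mapG {m : ℕ} (hm : 1 ≤ m) : Semistable (2 * m + 1) (mapG m) := by
  have hle : ∀ z, (depthP (mapG m) z : ℚ) ≤ m := fun z => by
    rw [depthP_mapG hm, rootMult_X_pow_mul_X_pow]
    split_ifs <;> push_cast <;> [exact Nat.cast_le.mpr (Nat.sub_le m 1); rfl; positivity]
  refine ⟨fun z => ?_, fun z hz => absurd hz ?_⟩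
  · push_cast; linarith [hle z]
  · push_cast; linarith [hle z]

theorem not_stable_mapG {m : ℕ} (hm : 1 ≤ m) : ¬ Stable (2 * m + 1) (mapG m) := by
  refine fun h => h.2 infty ?_ (fhatFun_mapG_infty hm)
  rw [depthP_mapG hm, rootMult_X_pow_mul_X_pow, if_neg infty_rep_zero_ne_zero,
    if_pos infty_rep_one]
  push_cast
  linarith

theorem conj_mapG_projEq (m : ℕ) {t : ℂ} (ht : t ≠ 0) :
    ProjEq (X 0 ^ (m + 1) * X 1 ^ m, C t * (X 0 ^ (m - 1) * X 1 ^ (m + 2)))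
      (comp2 (C t * X 0, X 1) (comp2 (mapG m) (X 0, C t * X 1))) := by
  refine ⟨t ^ (m + 1), pow_ne_zero _ ht, ?_⟩
  simp only [comp2, mapG, map_mul, map_pow, aeval_X, aeval_C, algebraMap_eq,
    Matrix.cons_val_zero, Matrix.cons_val_one, Prod.mk.injEq]
  constructor <;> ring

/-- for odd `d = 2m+1 ≥ 3`, the maps
`F = [X^{m+1}Y^m : 0]` and `G = [X^{m+1}Y^m : X^{m-1}Y^{m+2}]` are semistable but not
stable, and the conjugates `M_t ∘ G ∘ M_t^{-1}` (with `M_t = [tX : Y]`) are projectively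
the pairs `(X^{m+1}Y^m, t·X^{m-1}Y^{m+2})`, which converge coefficientwise to `F`
as `t → 0`. -/
theorem statement11 (d m : ℕ) (hm : 1 ≤ m) (hd : d = 2 * m + 1) :
    Semistable d ((X 0 ^ (m + 1) * X 1 ^ m : MP), (0 : MP)) ∧
    ¬ Stable d ((X 0 ^ (m + 1) * X 1 ^ m : MP), (0 : MP)) ∧
    Semistable d ((X 0 ^ (m + 1) * X 1 ^ m : MP), (X 0 ^ (m - 1) * X 1 ^ (m + 2) : MP)) ∧
    ¬ Stable d ((X 0 ^ (m + 1) * X 1 ^ m : MP), (X 0 ^ (m - 1) * X 1 ^ (m + 2) : MP)) ∧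
    (∀ t : ℂ, t ≠ 0 →
      ProjEq ((X 0 ^ (m + 1) * X 1 ^ m : MP), (C t * (X 0 ^ (m - 1) * X 1 ^ (m + 2)) : MP))
        (comp2 ((C t * X 0 : MP), (X 1 : MP))
          (comp2 ((X 0 ^ (m + 1) * X 1 ^ m : MP), (X 0 ^ (m - 1) * X 1 ^ (m + 2) : MP))
            ((X 0 : MP), (C t * X 1 : MP))))) ∧
    (∀ μ : Fin 2 →₀ ℕ,
      Tendsto (fun t : ℂ =>
          (coeff μ (X 0 ^ (m + 1) * X 1 ^ m : MP),
           coeff μ (C t * (X 0 ^ (m - 1) * X 1 ^ (m + 2)) : MP)))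
        (𝓝[≠] (0 : ℂ))
        (𝓝 (coeff μ (X 0 ^ (m + 1) * X 1 ^ m : MP), coeff μ (0 : MP)))) := by
  subst hd
  refine ⟨semistable_mapF m, not_stable_mapF m, semistable_mapG hm, not_stable_mapG hm,
    fun t ht => conj_mapG_projEq m ht, fun μ => ?_⟩
  simp only [coeff_C_mul, coeff_zero]
  refine tendsto_nhdsWithin_of_tendsto_nhds ?_
  exact (continuous_const.prodMk (continuous_id.mul continuous_const)).tendsto' 0 _ (by simp)
end

section
/- Let d ≥ 4, n ≥ 2, and let f = [0 : H_f] ∈ Rat_d^s ∩ I(d), i.e., f = H_f·[0:1] where H_f ∈ ℂ[X,Y] is homogeneous of degree d with H_f(0,1) = 0 (so f̂ ≡ [0:1] and [0:1] is a hole of f) and f is stable. For t ∈ ℂ ∖ {0} let g_t = H_f·[t : 1] = [t·H_f : H_f] ∈ ℙ^{2d+1}. Then: (i) g_t → f in ℙ^{2d+1} as t → 0; (ii) for all but finitely many t, g_t ∉ I(d) and g_t^n = (H_f)^{dⁿ⁻¹}·[t : 1] in ℙ^{2dⁿ+1}; (iii) g_t^n → g_n := (H_f)^{dⁿ⁻¹}·[0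 : 1] in ℙ^{2dⁿ+1} as t → 0; and (iv) g_n ∈ Rat_{dⁿ}^s, with d_{[0:1]}(g_n) = dⁿ⁻¹·d_{[0:1]}(f). -/
open MvPolynomial Filter Topology
open scoped Classical

/-! Since `g_t = H·[t : 1]` is `H` times a constant map, composing with it only substitutes into
`H`: by homogeneity `H(s·Q, r·Q) = H(s, r)·Q^d`, so each iterate is `H^{dᵏ}·[t : 1]` up to a scalar
built from `H(t, 1)`, which is nonzero unless `t` is one of the finitely many roots of `H(T, 1)`.
The limit `g_n = H^m·[0 : 1]` still induces the constant map `[0 : 1]`, while every depth is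
multiplied by `m`, so the stability inequalities of `f` scale to those of `g_n`. -/

theorem MvPolynomial.IsHomogeneous.aeval_smul {σ R S : Type*} [CommSemiring R] [CommSemiring S]
    [Algebra R S] {φ : MvPolynomial σ R} {d : ℕ} (hφ : φ.IsHomogeneous d) (c : S) (x : σ → S) :
    MvPolynomial.aeval (c • x) φ = c ^ d * MvPolynomial.aeval x φ := by
  simp only [aeval_def, eval₂_eq, Finset.mul_sum]
  refine Finset.sum_congr rfl fun μ hμ => ?_
  have hdeg : ∑ i ∈ μ.support, μ i = d := by
    simpa [Finsupp.weight_apply, Finsupp.sum] using hφ (mem_support_iff.mp hμ)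
  simp only [Pi.smul_apply, smul_eq_mul, mul_pow, Finset.prod_mul_distrib,
    Finset.prod_pow_eq_pow_sum, hdeg]
  ring

theorem MvPolynomial.IsHomogeneous.eval_smul {σ R : Type*} [CommSemiring R]
    {φ : MvPolynomial σ R} {d : ℕ} (hφ : φ.IsHomogeneous d) (c : R) (x : σ → R) :
    eval (c • x) φ = c ^ d * eval x φ :=
  hφ.aeval_smul c x

lemma linForm_eq_sumSMulX (z : P1) :
    linForm z = sumSMulX (Finsupp.equivFunOnFinite.symm ![z.rep 1, -z.rep 0]) := by
  simp [linForm, sumSMulX, Finsupp.linearCombination_apply, Finsupp.sum_fintype, smul_eq_C_mul,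
    sub_eq_add_neg]

lemma prime_linForm (z : P1) : Prime (linForm z) := by
  have hrep : ![z.rep 1, -z.rep 0] ≠ 0 := by
    intro h
    apply z.rep_nonzero
    ext i
    fin_cases i
    · simpa using congrFun h 1
    · simpa using congrFun h 0
  rw [linForm_eq_sumSMulX]
  refine (irreducible_sumSMulX _ ?_ fun r hr => ?_).prime
  · simpa [Finsupp.support_nonempty_iff] using hrep
  · refine isUnit_iff_ne_zero.mpr fun hr0 => hrep ?_
    subst hr0
    ext i
    simpa using hr i

lemma rootMult_eq_multiplicity {G : MP} (hG : G ≠ 0) (z : P1) :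
    rootMult G z = multiplicity (linForm z) G := by
  have hfin : FiniteMultiplicity (linForm z) G :=
    .of_not_isUnit (prime_linForm z).not_isUnit hG
  rw [rootMult, show {k | linForm z ^ k ∣ G} = Set.Iic (multiplicity (linForm z) G) from
    Set.ext fun k => hfin.pow_dvd_iff_le_multiplicity, csSup_Iic]

lemma rootMult_pow {G : MP} (hG : G ≠ 0) (z : P1) (m : ℕ) :
    rootMult (G ^ m) z = m * rootMult G z := by
  rw [rootMult_eq_multiplicity (pow_ne_zero m hG), rootMult_eq_multiplicity hG,
    FiniteMultiplicity.multiplicity_pow (prime_linForm z)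
      (.of_not_isUnit (prime_linForm z).not_isUnit hG)]

lemma depthP_zero_left (G : MP) (z : P1) : depthP (0, G) z = rootMult G z := by
  simp only [depthP, Hgcd, gcd_zero_left, rootMult, dvd_normalize_iff]

lemma depthP_zero_pow {G : MP} (hG : G ≠ 0) (z : P1) (m : ℕ) :
    depthP (0, G ^ m) z = m * depthP (0, G) z := by
  rw [depthP_zero_left, depthP_zero_left, rootMult_pow hG]

lemma eval_linForm_mk {v : Fin 2 → ℂ} (hv : v ≠ 0) :
    eval v (linForm (Projectivization.mk ℂ v hv)) = 0 := by
  obtain ⟨a, ha⟩ := Projectivization.exists_smul_eq_mk_rep ℂ v hv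
  simp only [linForm, ← ha, map_sub, map_mul, eval_C, eval_X, Units.smul_def, Pi.smul_apply,
    smul_eq_mul]
  ring

lemma apply₁_eq_ptc {g : MP × MP} {t : ℂ} (hg : g.1 = C t * g.2) {z : P1}
    (hz : eval z.rep g.2 ≠ 0) : apply₁ g z = ptc t := by
  have hval : ![eval z.rep g.1, eval z.rep g.2] = eval z.rep g.2 • ![t, 1] := by
    ext i
    fin_cases i <;> simp [hg, mul_comm]
  have hne : ![eval z.rep g.1, eval z.rep g.2] ≠ 0 := by
    rw [hval]
    exact smul_ne_zero hz fun h => one_ne_zero (congrFun h 1)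
  rw [apply₁, dif_pos hne, ptc, Projectivization.mk_eq_mk_iff']
  exact ⟨_, hval.symm⟩

lemma fhatFun_C_mul_self {G : MP} (hG : G ≠ 0) (t : ℂ) (z : P1) :
    fhatFun (C t * G, G) z = ptc t := by
  set f : MP × MP := (C t * G, G)
  have h₁ : C t * G = Hgcd f * (fhat f).1 := (dvd_def.mp (gcd_dvd_left f.1 f.2)).choose_spec
  have h₂ : G = Hgcd f * (fhat f).2 := (dvd_def.mp (gcd_dvd_right f.1 f.2)).choose_spec
  have hHf : Hgcd f ≠ 0 := fun h => hG (by rw [h₂, h, zero_mul])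
  obtain ⟨w, hw⟩ : G ∣ Hgcd f := dvd_gcd (dvd_mul_left G (C t)) dvd_rfl
  have hunit : IsUnit (fhat f).2 :=
    .of_mul_eq_one_right w (mul_left_cancel₀ hG (by rw [← mul_assoc, ← hw, ← h₂, mul_one]))
  have hfst : (fhat f).1 = C t * (fhat f).2 :=
    mul_left_cancel₀ hHf (by rw [← h₁, mul_left_comm, ← h₂])
  exact apply₁_eq_ptc hfst (hunit.map (eval z.rep)).ne_zero

lemma fhatFun_zero_left {G : MP} (hG : G ≠ 0) (z : P1) : fhatFun (0, G) z = ptc 0 := by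
  simpa using fhatFun_C_mul_self hG 0 z

lemma not_idet_C_mul_self {G : MP} (hG : G ≠ 0) {t : ℂ} (ht : eval ![t, 1] G ≠ 0) :
    ¬ Idet (C t * G, G) := by
  rintro ⟨c, hc, hole⟩
  obtain rfl : c = ptc t := (hc (ptc t)).symm.trans (fhatFun_C_mul_self hG t _)
  obtain ⟨q, hq⟩ := hole.trans (gcd_dvd_right (C t * G) G)
  exact ht (by rw [hq, map_mul, ptc, eval_linForm_mk, zero_mul])

lemma stable_zero_pow {d m : ℕ} {G : MP} (hG : G ≠ 0) (hm : 0 < m) (hst : Stable d (0, G)) :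
    Stable (m * d) (0, G ^ m) := by
  have hmQ : (1 : ℚ) ≤ m := by exact_mod_cast hm
  refine ⟨fun z => ?_, fun h hh => ?_⟩
  · have hz := hst.1 z
    rw [depthP_zero_pow hG]
    push_cast
    nlinarith
  · rw [fhatFun_zero_left (pow_ne_zero m hG), ← fhatFun_zero_left hG h]
    refine hst.2 h ?_
    rw [depthP_zero_pow hG] at hh
    push_cast at hh
    nlinarith

lemma tendsto_coeff_C_mul (G : MP) (μ : Fin 2 →₀ ℕ) :
    Tendsto (fun t : ℂ => (coeff μ (C t * G), coeff μ G)) (𝓝[≠] 0)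
      (𝓝 (coeff μ (0 : MP), coeff μ G)) := by
  simp only [coeff_C_mul, coeff_zero]
  refine Tendsto.prodMk_nhds ?_ tendsto_const_nhds
  simpa using ((continuous_mul_const (coeff μ G)).tendsto 0).mono_left nhdsWithin_le_nhds

lemma aeval_C_mul_self_of_isHomogeneous {G : MP} {d : ℕ} (hG : G.IsHomogeneous d) (s r : ℂ)
    (Q : MP) : aeval ![C s * Q, C r * Q] G = C (eval ![s, r] G) * Q ^ d := by
  have hvec : ![C s * Q, C r * Q] = Q • (C ∘ ![s, r]) := by
    ext i : 1
    fin_cases i <;> simp [mul_comm]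
  rw [hvec, hG.aeval_smul, aeval_C_comp_left, mul_comm]
  rfl

lemma comp2_C_mul_self {G : MP} {d : ℕ} (hG : G.IsHomogeneous d) (t s r : ℂ) (Q : MP) :
    comp2 (C t * G, G) (C s * Q, C r * Q)
      = (C (eval ![s, r] G) * (C t * Q ^ d), C (eval ![s, r] G) * Q ^ d) := by
  simp only [comp2, map_mul, aeval_C, aeval_C_mul_self_of_isHomogeneous hG, algebraMap_eq]
  ring_nf

lemma projEq_iterPair_C_mul_self {G : MP} {d : ℕ} (hG : G.IsHomogeneous d) {t : ℂ}
    (ht : eval ![t, 1] G ≠ 0) (k : ℕ) :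
    ProjEq (C t * G ^ d ^ k, G ^ d ^ k) (iterPair (C t * G, G) (k + 1)) := by
  induction k with
  | zero =>
    refine ⟨1, one_ne_zero, ?_⟩
    have hX : ![X 0, X 1] = (X : Fin 2 → MP) := by
      ext i : 1
      fin_cases i <;> rfl
    simp [iterPair, comp2, hX]
  | succ k ih =>
    obtain ⟨c, hc, hk⟩ := ih
    have hscale : eval ![c * t, c] G = eval ![t, 1] G * c ^ d := by
      simpa [mul_comm] using hG.eval_smul c ![t, 1]
    refine ⟨eval ![t, 1] G * c ^ d, mul_ne_zero ht (pow_ne_zero d hc), ?_⟩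
    rw [iterPair, hk, ← mul_assoc, ← map_mul, comp2_C_mul_self hG, hscale, ← pow_mul, ← pow_succ]

lemma finite_setOf_eval_eq_zero {G : MP} {d : ℕ} (hG : G.IsHomogeneous d) (hG0 : G ≠ 0) :
    {t : ℂ | eval ![t, 1] G = 0}.Finite := by
  set p : Polynomial ℂ := aeval ![Polynomial.X, 1] G
  have hp (t : ℂ) : p.eval t = eval ![t, 1] G := by
    have hv : (fun i => Polynomial.aeval t ((![Polynomial.X, 1] : Fin 2 → Polynomial ℂ) i))
        = ![t, 1] := by
      ext i : 1
      fin_cases i <;> simp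
    rw [← Polynomial.coe_aeval_eq_eval, comp_aeval_apply, hv]
    rfl
  refine (Polynomial.finite_setOfPred_isRoot (p := p) fun hp0 => hG0 ?_).subset fun t ht => ?_
  · refine funext_set ![Set.univ, {0}ᶜ] (fun i => ?_) fun x hx => ?_
    · fin_cases i
      exacts [Set.infinite_univ, (Set.finite_singleton 0).infinite_compl]
    · have hx1 : x 1 ≠ 0 := hx 1 trivial
      have hvec : x = x 1 • ![x 0 / x 1, 1] := by
        ext i
        fin_cases i <;> simp [mul_div_cancel₀ _ hx1]
      rw [hvec, hG.eval_smul, ← hp, hp0]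
      simp
  · simpa [Polynomial.IsRoot, hp] using ht

theorem statement17_general (d n : ℕ) (hd : 4 ≤ d) (hn : 2 ≤ n) (H : MP)
    (hH : H.IsHomogeneous d) (hH0 : H ≠ 0)
    (hst : Stable d ((0 : MP), H)) :
    -- (i) g_t → f as t → 0
    (∀ μ : Fin 2 →₀ ℕ,
      Tendsto (fun t : ℂ => (coeff μ (C t * H), coeff μ H)) (𝓝[≠] (0 : ℂ))
        (𝓝 (coeff μ (0 : MP), coeff μ H))) ∧
    -- (ii) for all but finitely many t ≠ 0, g_t ∉ I(d) and g_t^n = H^{dⁿ⁻¹}·[t : 1]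
    (∃ S : Set ℂ, S.Finite ∧ ∀ t : ℂ, t ∉ S → t ≠ 0 →
      ¬ Idet ((C t * H : MP), H) ∧
      ProjEq ((C t * H ^ d ^ (n - 1) : MP), (H ^ d ^ (n - 1) : MP))
        (iterPair ((C t * H : MP), H) n)) ∧
    -- (iii) g_t^n → g_n as t → 0
    (∀ μ : Fin 2 →₀ ℕ,
      Tendsto (fun t : ℂ => (coeff μ (C t * H ^ d ^ (n - 1)), coeff μ (H ^ d ^ (n - 1))))
        (𝓝[≠] (0 : ℂ))
        (𝓝 (coeff μ (0 : MP), coeff μ (H ^ d ^ (n - 1))))) ∧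
    -- (iv) g_n is stable, with depth dⁿ⁻¹·d_{[0:1]}(f) at [0:1]
    Stable (d ^ n) ((0 : MP), (H ^ d ^ (n - 1) : MP)) ∧
    depthP ((0 : MP), (H ^ d ^ (n - 1) : MP)) (ptc 0)
      = d ^ (n - 1) * depthP ((0 : MP), H) (ptc 0) := by
  have hn1 : n - 1 + 1 = n := by omega
  refine ⟨tendsto_coeff_C_mul H, ⟨_, finite_setOf_eval_eq_zero hH hH0, fun t ht _ => ?_⟩,
    tendsto_coeff_C_mul _, ?_, depthP_zero_pow hH0 _ _⟩
  · refine ⟨not_idet_C_mul_self hH0 ht, ?_⟩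
    simpa only [hn1] using projEq_iterPair_C_mul_self hH ht (n - 1)
  · rw [← pow_sub_one_mul (by omega : n ≠ 0)]
    exact stable_zero_pow hH0 (pow_pos (by omega) _) hst

/-- for stable `f = [0 : H] ∈ Rat_d^s ∩ I(d)` and `g_t = [tH : H]`:
`g_t → f`; for all but finitely many `t ≠ 0`, `g_t ∉ I(d)` and
`g_t^n = H^{dⁿ⁻¹}·[t : 1]` projectively; `g_t^n → g_n = [0 : H^{dⁿ⁻¹}]`, which is
stable with `d_{[0:1]}(g_n) = dⁿ⁻¹·d_{[0:1]}(f)`. -/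
theorem statement17 (d n : ℕ) (hd : 4 ≤ d) (hn : 2 ≤ n) (H : MP)
    (hH : H.IsHomogeneous d) (hH0 : H ≠ 0) (hzero : eval ![(0 : ℂ), 1] H = 0)
    (hst : Stable d ((0 : MP), H)) :
    -- (i) g_t → f as t → 0
    (∀ μ : Fin 2 →₀ ℕ,
      Tendsto (fun t : ℂ => (coeff μ (C t * H), coeff μ H)) (𝓝[≠] (0 : ℂ))
        (𝓝 (coeff μ (0 : MP), coeff μ H))) ∧
    -- (ii) for all but finitely many t ≠ 0, g_t ∉ I(d) and g_t^n = H^{dⁿ⁻¹}·[t : 1]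
    (∃ S : Set ℂ, S.Finite ∧ ∀ t : ℂ, t ∉ S → t ≠ 0 →
      ¬ Idet ((C t * H : MP), H) ∧
      ProjEq ((C t * H ^ d ^ (n - 1) : MP), (H ^ d ^ (n - 1) : MP))
        (iterPair ((C t * H : MP), H) n)) ∧
    -- (iii) g_t^n → g_n as t → 0
    (∀ μ : Fin 2 →₀ ℕ,
      Tendsto (fun t : ℂ => (coeff μ (C t * H ^ d ^ (n - 1)), coeff μ (H ^ d ^ (n - 1))))
        (𝓝[≠] (0 : ℂ))
        (𝓝 (coeff μ (0 : MP), coeff μ (H ^ d ^ (n - 1))))) ∧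
    -- (iv) g_n is stable, with depth dⁿ⁻¹·d_{[0:1]}(f) at [0:1]
    Stable (d ^ n) ((0 : MP), (H ^ d ^ (n - 1) : MP)) ∧
    depthP ((0 : MP), (H ^ d ^ (n - 1) : MP)) (ptc 0)
      = d ^ (n - 1) * depthP ((0 : MP), H) (ptc 0) :=
  statement17_general d n hd hn H hH hH0 hst
end
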